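/- arXiv:1911.08865 — 6 statements merged into one kernel-verified Lean document; each statement's English description precedes it below -/
import Mathlib

section
/- For X sufficiently large, the number of pairs of integers (n₁, n₂) with X/2 < n₁ ≤ X, X/2 < n₂ ≤ X and |n₁·log n₁ − n₂·log n₂| ≤ H is O(H·X/log X + X), uniformly in H ≥ 1. -/
/-- Key gap lemma: for naturals `m ≤ M` with `X/2 < m`,
`(M - m) * log (X/2) ≤ M log M - m log m`. -/
lemma stmt4_gap (X : ℝ) (hX : 4 ≤ X) (m M : ℕ) (hm : X / 2 < (m : ℝ)) (hmM : m ≤ M) :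
    ((M : ℝ) - m) * Real.log (X / 2) ≤ (M : ℝ) * Real.log M - (m : ℝ) * Real.log m := by
  have hm1 : (1 : ℝ) ≤ (m : ℝ) := by linarith
  have hmpos : (0 : ℝ) < (m : ℝ) := by linarith
  have hMm : (m : ℝ) ≤ (M : ℝ) := by exact_mod_cast hmM
  have hlog1 : Real.log (X / 2) ≤ Real.log m := Real.log_le_log (by linarith) (le_of_lt hm)
  have hlog2 : Real.log m ≤ Real.log M := Real.log_le_log hmpos hMm
  have hlogm_nonneg : 0 ≤ Real.log m := Real.log_nonneg hm1
  nlinarith [mul_le_mul_of_nonneg_left hlog2 (by positivity : (0:ℝ) ≤ (M:ℝ))]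

theorem stmt4 :
    ∃ C : ℝ, 0 < C ∧ ∃ X₀ : ℝ, ∀ X : ℝ, X ≥ X₀ → ∀ H : ℝ, 1 ≤ H →
      (((Finset.Icc 1 ⌊X⌋₊ ×ˢ Finset.Icc 1 ⌊X⌋₊).filter (fun p : ℕ × ℕ =>
          X / 2 < (p.1 : ℝ) ∧ X / 2 < (p.2 : ℝ) ∧
          |(p.1 : ℝ) * Real.log p.1 - (p.2 : ℝ) * Real.log p.2| ≤ H)).card : ℝ)
        ≤ C * (H * X / Real.log X + X) := by
  classical
  refine ⟨4, by norm_num, 4, fun X hX H hH => ?_⟩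
  have hX4 : (4 : ℝ) ≤ X := hX
  have hX0 : (0 : ℝ) < X := by linarith
  set N := ⌊X⌋₊ with hN
  set L := Real.log (X / 2) with hLdef
  have hL : 0 < L := Real.log_pos (by linarith)
  have hlogX : 0 < Real.log X := Real.log_pos (by linarith)
  have hLhalf : Real.log X / 2 ≤ L := by
    rw [hLdef, Real.log_div (by linarith) (by norm_num)]
    have h4 : Real.log 4 ≤ Real.log X := Real.log_le_log (by norm_num) hX4
    have : Real.log 4 = 2 * Real.log 2 := by
      rw [show (4:ℝ) = 2 ^ 2 by norm_num, Real.log_pow]; push_cast; ring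
    linarith
  -- per-row bound
  have row : ∀ n₁ : ℕ,
      (((Finset.Icc 1 N).filter (fun n₂ : ℕ =>
          X / 2 < (n₁ : ℝ) ∧ X / 2 < (n₂ : ℝ) ∧
          |(n₁ : ℝ) * Real.log n₁ - (n₂ : ℝ) * Real.log n₂| ≤ H)).card : ℝ)
        ≤ 2 * H / L + 1 := by
    intro n₁
    set T := (Finset.Icc 1 N).filter (fun n₂ : ℕ =>
          X / 2 < (n₁ : ℝ) ∧ X / 2 < (n₂ : ℝ) ∧
          |(n₁ : ℝ) * Real.log n₁ - (n₂ : ℝ) * Real.log n₂| ≤ H) with hT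
    rcases T.eq_empty_or_nonempty with he | hne
    · rw [he]
      simp only [Finset.card_empty, Nat.cast_zero]
      positivity
    · set m := T.min' hne with hm
      set M := T.max' hne with hM
      have hmT : m ∈ T := T.min'_mem hne
      have hMT : M ∈ T := T.max'_mem hne
      have hmM : m ≤ M := T.min'_le M hMT
      obtain ⟨-, hm2, hm3⟩ := (Finset.mem_filter.mp hmT).2
      obtain ⟨-, hM2, hM3⟩ := (Finset.mem_filter.mp hMT).2
      have hsub : T ⊆ Finset.Icc m M := fun x hx =>
        Finset.mem_Icc.mpr ⟨T.min'_le x hx, T.le_max' x hx⟩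
      have hcard : T.card ≤ M - m + 1 := by
        calc T.card ≤ (Finset.Icc m M).card := Finset.card_le_card hsub
        _ = M + 1 - m := Nat.card_Icc m M
        _ = M - m + 1 := by omega
      have hgap : ((M : ℝ) - m) * L ≤
          (M : ℝ) * Real.log M - (m : ℝ) * Real.log m := stmt4_gap X hX4 m M hm2 hmM
      have habs : (M : ℝ) * Real.log M - (m : ℝ) * Real.log m ≤ 2 * H := by
        have h1 := abs_le.mp hm3
        have h2 := abs_le.mp hM3
        linarith [h1.1, h1.2, h2.1, h2.2]
      have hMm : ((M : ℝ) - m) ≤ 2 * H / L := by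
        rw [le_div_iff₀ hL]
        linarith
      have : (T.card : ℝ) ≤ (M : ℝ) - m + 1 := by
        have := hcard
        have hc : (T.card : ℝ) ≤ ((M - m + 1 : ℕ) : ℝ) := by exact_mod_cast this
        have : ((M - m + 1 : ℕ) : ℝ) ≤ (M : ℝ) - m + 1 := by
          push_cast [Nat.cast_sub hmM]
          simp [Nat.cast_sub hmM]
        linarith
      linarith
  -- sum the rows
  have hsplit : (((Finset.Icc 1 N ×ˢ Finset.Icc 1 N).filter (fun p : ℕ × ℕ =>
          X / 2 < (p.1 : ℝ) ∧ X / 2 < (p.2 : ℝ) ∧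
          |(p.1 : ℝ) * Real.log p.1 - (p.2 : ℝ) * Real.log p.2| ≤ H)).card)
      = ∑ n₁ ∈ Finset.Icc 1 N, ((Finset.Icc 1 N).filter (fun n₂ : ℕ =>
          X / 2 < (n₁ : ℝ) ∧ X / 2 < (n₂ : ℝ) ∧
          |(n₁ : ℝ) * Real.log n₁ - (n₂ : ℝ) * Real.log n₂| ≤ H)).card := by
    rw [Finset.card_filter, Finset.sum_product]
    exact Finset.sum_congr rfl fun n₁ _ => (Finset.card_filter _ _).symm
  have hNX : (N : ℝ) ≤ X := Nat.floor_le (le_of_lt hX0)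
  have hbound : (((Finset.Icc 1 N ×ˢ Finset.Icc 1 N).filter (fun p : ℕ × ℕ =>
          X / 2 < (p.1 : ℝ) ∧ X / 2 < (p.2 : ℝ) ∧
          |(p.1 : ℝ) * Real.log p.1 - (p.2 : ℝ) * Real.log p.2| ≤ H)).card : ℝ)
      ≤ (N : ℝ) * (2 * H / L + 1) := by
    rw [hsplit]
    push_cast
    calc (∑ n₁ ∈ Finset.Icc 1 N, (((Finset.Icc 1 N).filter (fun n₂ : ℕ =>
          X / 2 < (n₁ : ℝ) ∧ X / 2 < (n₂ : ℝ) ∧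
          |(n₁ : ℝ) * Real.log n₁ - (n₂ : ℝ) * Real.log n₂| ≤ H)).card : ℝ))
        ≤ ∑ _n₁ ∈ Finset.Icc 1 N, (2 * H / L + 1) :=
          Finset.sum_le_sum (fun i _ => row i)
      _ = ((Finset.Icc 1 N).card : ℝ) * (2 * H / L + 1) := by
          rw [Finset.sum_const, nsmul_eq_mul]
      _ ≤ (N : ℝ) * (2 * H / L + 1) := by
          apply mul_le_mul_of_nonneg_right
          · simp [Nat.card_Icc]
          · positivity
  refine hbound.trans ?_
  have hH0 : 0 < H := by linarith
  have key : 2 * H / L ≤ 4 * H / Real.log X := by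
    rw [div_le_div_iff₀ hL hlogX]
    nlinarith
  have h1 : (N : ℝ) * (2 * H / L + 1) ≤ X * (4 * H / Real.log X + 1) := by
    apply mul_le_mul hNX (by linarith) (by positivity) (le_of_lt hX0)
  refine h1.trans ?_
  have : X * (4 * H / Real.log X + 1) = 4 * (H * X / Real.log X) + X := by
    field_simp
  rw [this]
  nlinarith [div_nonneg (mul_nonneg (le_of_lt hH0) (le_of_lt hX0)) (le_of_lt hlogX)]
end

section
/- For X sufficiently large and any H ≥ 1, the sum over pairs of integers (n₁, n₂) with X/2 < n₁, n₂ ≤ X and |n₁·log n₁ − n₂·log n₂| > H of 1/|n₁·log n₁ − n₂·log n₂| is O((X/log X)·log X) = O(X). -/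
/-!
For `X / 2 < b ≤ a`, writing `a log a - b log b = (a - b) log a + b (log a - log b)` gives
`|a log a - b log b| ≥ |a - b| log (X / 2)`. With `N = ⌊X⌋` the sum is therefore at most
`(log (X / 2))⁻¹ ∑_{a ≠ b ≤ N} |a - b|⁻¹ ≤ (log (X / 2))⁻¹ · N · 2 H_N`, and `H_N ≤ 1 + log X`.
-/

open Finset Real

lemma sum_inv_le_harmonic {ι : Type*} {s : Finset ι} {φ : ι → ℕ} {N : ℕ}
    (hinj : Set.InjOn φ {i | i ∈ s ∧ φ i ≠ 0}) (hle : ∀ i ∈ s, φ i ≤ N) :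
    ∑ i ∈ s, ((φ i : ℝ))⁻¹ ≤ harmonic N := by
  classical
  calc ∑ i ∈ s, ((φ i : ℝ))⁻¹ = ∑ i ∈ s with φ i ≠ 0, ((φ i : ℝ))⁻¹ :=
        (sum_filter_of_ne fun i _ h => by simpa using h).symm
    _ = ∑ d ∈ (s.filter (φ · ≠ 0)).image φ, (d : ℝ)⁻¹ :=
        (sum_image (f := fun d : ℕ => (d : ℝ)⁻¹) (s := s.filter (φ · ≠ 0)) fun i hi j hj =>
          hinj (by simpa using hi) (by simpa using hj)).symm
    _ ≤ ∑ d ∈ Icc 1 N, (d : ℝ)⁻¹ := by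
        refine sum_le_sum_of_subset_of_nonneg ?_ fun _ _ _ => by positivity
        intro d hd
        obtain ⟨i, hi, rfl⟩ := mem_image.1 hd
        obtain ⟨hs, h0⟩ := mem_filter.1 hi
        exact mem_Icc.2 ⟨Nat.one_le_iff_ne_zero.2 h0, hle i hs⟩
    _ = harmonic N := by simp [harmonic_eq_sum_Icc]

/-- Truncated subtraction splits `|a - b|⁻¹` into its `b < a` and `a < b` parts (`0⁻¹ = 0`). -/
lemma inv_abs_natCast_sub (a b : ℕ) :
    |(a : ℝ) - b|⁻¹ = ((a - b : ℕ) : ℝ)⁻¹ + ((b - a : ℕ) : ℝ)⁻¹ := by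
  rcases le_total a b with h | h
  · rw [Nat.sub_eq_zero_of_le h, Nat.cast_sub h, abs_sub_comm, abs_of_nonneg (by simpa using h)]
    simp
  · rw [Nat.sub_eq_zero_of_le h, Nat.cast_sub h, abs_of_nonneg (by simpa using h)]
    simp

lemma sum_inv_abs_natCast_sub_le {a N : ℕ} (ha : a ≤ N) :
    ∑ b ∈ Icc 1 N, |(a : ℝ) - b|⁻¹ ≤ 2 * harmonic N := by
  simp_rw [inv_abs_natCast_sub, sum_add_distrib, two_mul]
  gcongr <;>
    exact sum_inv_le_harmonic (fun b hb c hc h => by simp at hb hc h; omega)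
      fun b hb => by simp at hb; omega

lemma sum_inv_abs_natCast_sub_Icc_prod_le (N : ℕ) :
    ∑ p ∈ Icc 1 N ×ˢ Icc 1 N, |(p.1 : ℝ) - p.2|⁻¹ ≤ N * (2 * harmonic N) := by
  rw [sum_product]
  calc _ ≤ ∑ _a ∈ Icc 1 N, 2 * (harmonic N : ℝ) :=
        sum_le_sum fun a ha => sum_inv_abs_natCast_sub_le (mem_Icc.1 ha).2
    _ = N * (2 * harmonic N) := by simp

lemma abs_sub_mul_log_le_abs_mul_log_sub_mul_log {c x y : ℝ} (hc : 0 < c) (hx : c ≤ x)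
    (hy : c ≤ y) : |x - y| * log c ≤ |x * log x - y * log y| := by
  wlog hyx : y ≤ x generalizing x y
  · rw [abs_sub_comm, abs_sub_comm (x * log x)]
    exact this hy hx (le_of_not_ge hyx)
  have hlogx : log c ≤ log x := log_le_log hc hx
  have hlogy : log y ≤ log x := log_le_log (hc.trans_le hy) hyx
  rw [abs_of_nonneg (sub_nonneg.2 hyx)]
  refine le_trans ?_ (le_abs_self _)
  nlinarith

/-- Both sides are `0` when `x = y`. -/
lemma inv_abs_mul_log_sub_mul_log_le {c x y : ℝ} (hc : 1 < c) (hx : c ≤ x) (hy : c ≤ y) :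
    |x * log x - y * log y|⁻¹ ≤ (log c)⁻¹ * |x - y|⁻¹ := by
  rcases eq_or_ne x y with rfl | hne
  · simp
  have hlogc : 0 < log c := log_pos hc
  have hxy : 0 < |x - y| := abs_pos.2 (sub_ne_zero.2 hne)
  rw [← mul_inv, mul_comm (log c)]
  exact inv_anti₀ (by positivity)
    (abs_sub_mul_log_le_abs_mul_log_sub_mul_log (by linarith) hx hy)

lemma two_mul_one_add_log_le {X : ℝ} (hX : 4 ≤ X) : 2 * (1 + log X) ≤ 8 * log (X / 2) := by
  have hlog4 : 1 < log 4 := by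
    rw [lt_log_iff_exp_lt (by norm_num)]
    linarith [exp_one_lt_d9]
  have hlog2 : log 4 = 2 * log 2 := by
    rw [show (4 : ℝ) = 2 ^ 2 by norm_num, log_pow]; norm_num
  have h4X : log 4 ≤ log X := log_le_log (by norm_num) hX
  rw [log_div (by linarith) (by norm_num)]
  linarith

theorem stmt5 :
    ∃ C : ℝ, 0 < C ∧ ∃ X₀ : ℝ, ∀ X : ℝ, X ≥ X₀ → ∀ H : ℝ, 1 ≤ H →
      ∑ p ∈ (Finset.Icc 1 ⌊X⌋₊ ×ˢ Finset.Icc 1 ⌊X⌋₊).filter (fun p : ℕ × ℕ =>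
          X / 2 < (p.1 : ℝ) ∧ X / 2 < (p.2 : ℝ) ∧
          H < |(p.1 : ℝ) * Real.log p.1 - (p.2 : ℝ) * Real.log p.2|),
        1 / |(p.1 : ℝ) * Real.log p.1 - (p.2 : ℝ) * Real.log p.2|
      ≤ C * X := by
  refine ⟨8, by norm_num, 4, fun X hX H _ => ?_⟩
  set N := ⌊X⌋₊
  have hL : 0 < log (X / 2) := log_pos (by linarith)
  have hN : (N : ℝ) ≤ X := Nat.floor_le (by linarith)
  have hharmonic : 2 * (harmonic N : ℝ) ≤ 8 * log (X / 2) :=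
    (mul_le_mul_of_nonneg_left (harmonic_floor_le_one_add_log X (by linarith))
      zero_le_two).trans (two_mul_one_add_log_le hX)
  have hharmonic_nonneg : (0 : ℝ) ≤ harmonic N := Rat.cast_nonneg.2 (by rw [harmonic]; positivity)
  calc _ ≤ ∑ p ∈ _, (log (X / 2))⁻¹ * |(p.1 : ℝ) - p.2|⁻¹ := sum_le_sum fun p hp => by
          obtain ⟨-, h1, h2, -⟩ := mem_filter.1 hp
          rw [one_div]
          exact inv_abs_mul_log_sub_mul_log_le (by linarith) h1.le h2.le
    _ ≤ ∑ p ∈ Icc 1 N ×ˢ Icc 1 N, (log (X / 2))⁻¹ * |(p.1 : ℝ) - p.2|⁻¹ :=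
        sum_le_sum_of_subset_of_nonneg (filter_subset _ _) fun _ _ _ => by positivity
    _ ≤ (log (X / 2))⁻¹ * (N * (2 * harmonic N)) := by
        rw [← mul_sum]; gcongr; exact sum_inv_abs_natCast_sub_Icc_prod_le N
    _ ≤ (log (X / 2))⁻¹ * (X * (8 * log (X / 2))) := by gcongr
    _ = 8 * X := by field_simp
end

section
/- Define S(α) = Σ_{X/2 < p ≤ X} (log p)·e(α·p·log p), where the sum is over primes p and e(y) = exp(2πiy). Then for every real number n, ∫_n^{n+1} |S(α)|² dα ≪ X·(log X)², for X sufficiently large. -/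
/-!
Write `S(α) = ∑ a_p e(φ(p) α)` with `a_p = log p` and `φ(x) = x log x`. Expanding `|S(α)|²` and
integrating over an interval of length one, the diagonal `p = q` contributes at most
`π(X) log² X ≤ X log² X`, and the term `(p, q)` with `p ≠ q` at most `log² X / (π |φ(p) - φ(q)|)`.
Since `φ' = 1 + log ≥ log (X/2)` on `(X/2, X]`, the phases are separated:
`|φ(p) - φ(q)| ≥ |p - q| log (X/2)`. Hence each row of the double sum is bounded by
`log² X (1 + O(∑_{q ≠ p} 1/|p - q|) / log X)`, and the harmonic sum is `O(log X)`.
-/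

open Finset

noncomputable def Ssum (X α : ℝ) : ℂ :=
  ∑ p ∈ (Finset.Ioc ⌊X / 2⌋₊ ⌊X⌋₊).filter Nat.Prime,
    (Real.log p : ℂ) * Complex.exp (2 * Real.pi * Complex.I * (α * p * Real.log p))

open Complex ComplexConjugate intervalIntegral

lemma norm_sum_mul_exp_sq {ι : Type*} (T : Finset ι) (a : ι → ℂ) (b : ι → ℝ) (α : ℝ) :
    ‖∑ i ∈ T, a i * exp (I * b i * α)‖ ^ 2
      = ∑ i ∈ T, ∑ j ∈ T, (a i * conj (a j) * exp (I * ↑(b i - b j) * α)).re := by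
  set z := ∑ i ∈ T, a i * exp (I * b i * α)
  calc ‖z‖ ^ 2 = (z * conj z).re := by rw [mul_conj']; norm_cast
    _ = _ := by
      rw [map_sum, sum_mul_sum, re_sum]
      refine sum_congr rfl fun i _ => ?_
      rw [re_sum]
      refine sum_congr rfl fun j _ => ?_
      rw [map_mul, ← exp_conj, mul_mul_mul_comm, ← exp_add]
      congr 3
      simp only [map_mul, conj_I, conj_ofReal, ofReal_sub]
      ring

lemma integral_norm_sum_mul_exp_sq_le {ι : Type*} (T : Finset ι) (a : ι → ℂ) (b : ι → ℝ)
    (s t : ℝ) :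
    ∫ α in s..t, ‖∑ i ∈ T, a i * exp (I * b i * α)‖ ^ 2
      ≤ ∑ i ∈ T, ∑ j ∈ T, ‖a i‖ * ‖a j‖ * ‖∫ α in s..t, exp (I * ↑(b i - b j) * α)‖ := by
  have hcont (i j : ι) :
      Continuous fun α : ℝ => a i * conj (a j) * exp (I * ↑(b i - b j) * α) := by
    fun_prop
  simp_rw [norm_sum_mul_exp_sq]
  rw [integral_finsetSum fun i _ => Continuous.intervalIntegrable (by fun_prop) _ _]
  refine sum_le_sum fun i _ => ?_
  rw [integral_finsetSum fun j _ => Continuous.intervalIntegrable (by fun_prop) _ _]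
  refine sum_le_sum fun j _ => ?_
  calc ∫ α in s..t, (a i * conj (a j) * exp (I * ↑(b i - b j) * α)).re
      = (∫ α in s..t, a i * conj (a j) * exp (I * ↑(b i - b j) * α)).re :=
        reCLM.intervalIntegral_comp_comm ((hcont i j).intervalIntegrable _ _)
    _ ≤ ‖∫ α in s..t, a i * conj (a j) * exp (I * ↑(b i - b j) * α)‖ := re_le_norm _
    _ = ‖a i‖ * ‖a j‖ * ‖∫ α in s..t, exp (I * ↑(b i - b j) * α)‖ := by
        rw [integral_const_mul, norm_mul, norm_mul, norm_conj]

lemma norm_integral_exp_I_mul_le {d : ℝ} (hd : d ≠ 0) (s t : ℝ) :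
    ‖∫ α in s..t, exp (I * d * α)‖ ≤ 2 / |d| := by
  have hId : I * d ≠ 0 := mul_ne_zero I_ne_zero (ofReal_ne_zero.2 hd)
  rw [integral_exp_mul_complex hId, norm_div, norm_mul, norm_I, one_mul, norm_real, Real.norm_eq_abs]
  gcongr
  calc ‖exp (I * d * t) - exp (I * d * s)‖
      ≤ ‖exp (I * d * t)‖ + ‖exp (I * d * s)‖ := norm_sub_le _ _
    _ = 2 := by simp only [mul_assoc, ← ofReal_mul, norm_exp_I_mul_ofReal]; norm_num

lemma sum_one_div_le_one_add_log {s : Finset ℕ} {f : ℕ → ℕ} {B : ℕ}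
    (hf : ∀ q ∈ s, f q ∈ Icc 1 B) (hinj : Set.InjOn f s) :
    ∑ q ∈ s, (1 : ℝ) / f q ≤ 1 + Real.log B :=
  calc ∑ q ∈ s, (1 : ℝ) / f q = ∑ k ∈ s.image f, (1 : ℝ) / k := by rw [sum_image hinj]
    _ ≤ ∑ k ∈ Icc 1 B, (1 : ℝ) / k :=
        sum_le_sum_of_subset_of_nonneg (image_subset_iff.2 hf) fun _ _ _ => by positivity
    _ = harmonic B := by simp [harmonic_eq_sum_Icc]
    _ ≤ 1 + Real.log B := harmonic_le_one_add_log B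

lemma sum_erase_one_div_abs_sub_le {T : Finset ℕ} {B p : ℕ} (hT : ∀ q ∈ T, q ≤ B) (hp : p ≤ B) :
    ∑ q ∈ T.erase p, (1 : ℝ) / |(p : ℝ) - q| ≤ 2 * (1 + Real.log B) := by
  rw [two_mul, ← sum_filter_add_sum_filter_not _ (· < p)]
  have hbelow : ∑ q ∈ (T.erase p).filter (· < p), (1 : ℝ) / |(p : ℝ) - q|
      = ∑ q ∈ (T.erase p).filter (· < p), (1 : ℝ) / (p - q : ℕ) := by
    refine sum_congr rfl fun q hq => ?_
    have hqp : q < p := (mem_filter.1 hq).2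
    rw [Nat.cast_sub hqp.le, abs_of_pos (sub_pos.2 (Nat.cast_lt.2 hqp))]
  have habove : ∑ q ∈ (T.erase p).filter (¬ · < p), (1 : ℝ) / |(p : ℝ) - q|
      = ∑ q ∈ (T.erase p).filter (¬ · < p), (1 : ℝ) / (q - p : ℕ) := by
    refine sum_congr rfl fun q hq => ?_
    obtain ⟨hq, hpq⟩ := mem_filter.1 hq
    have hpq : p < q := by have := ne_of_mem_erase hq; omega
    rw [Nat.cast_sub hpq.le, abs_sub_comm, abs_of_pos (sub_pos.2 (Nat.cast_lt.2 hpq))]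
  rw [hbelow, habove]
  gcongr
  · refine sum_one_div_le_one_add_log (fun q hq => ?_) fun q hq r hr h => ?_
    · simp only [mem_filter, mem_erase] at hq
      simp only [mem_Icc]
      omega
    · simp only [coe_filter, mem_erase, Set.mem_ofPred_eq] at hq hr
      omega
  · refine sum_one_div_le_one_add_log (fun q hq => ?_) fun q hq r hr h => ?_
    · simp only [mem_filter, mem_erase] at hq
      have := hT q hq.1.2
      simp only [mem_Icc]
      omega
    · simp only [coe_filter, mem_erase, Set.mem_ofPred_eq] at hq hr
      omega

lemma integral_norm_sum_mul_exp_sq_le_of_separated {T : Finset ℕ} {a : ℕ → ℂ} {b : ℕ → ℝ}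
    {A δ : ℝ} {B : ℕ} (hT : ∀ q ∈ T, q ≤ B) (ha : ∀ p ∈ T, ‖a p‖ ≤ A) (hδ : 0 < δ)
    (hb : ∀ p ∈ T, ∀ q ∈ T, δ * |(p : ℝ) - q| ≤ |b p - b q|) (s : ℝ) :
    ∫ α in s..s + 1, ‖∑ p ∈ T, a p * exp (I * b p * α)‖ ^ 2
      ≤ #T * (A ^ 2 * (1 + 4 * (1 + Real.log B) / δ)) := by
  refine (integral_norm_sum_mul_exp_sq_le T a b s (s + 1)).trans ?_
  rw [← nsmul_eq_mul, ← sum_const]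
  refine sum_le_sum fun p hp => ?_
  have hA : 0 ≤ A := (norm_nonneg _).trans (ha p hp)
  have hoff : ∀ q ∈ T.erase p, ‖a p‖ * ‖a q‖ * ‖∫ α in s..s + 1, exp (I * ↑(b p - b q) * α)‖
      ≤ A ^ 2 * (2 / δ) * (1 / |(p : ℝ) - q|) := by
    intro q hq
    have hpq : 0 < |(p : ℝ) - q| :=
      abs_pos.2 (sub_ne_zero.2 (Nat.cast_injective.ne (ne_of_mem_erase hq).symm))
    have hsep := hb p hp q (mem_of_mem_erase hq)
    have hd : b p - b q ≠ 0 := abs_pos.1 ((mul_pos hδ hpq).trans_le hsep)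
    calc ‖a p‖ * ‖a q‖ * ‖∫ α in s..s + 1, exp (I * ↑(b p - b q) * α)‖
        ≤ A * A * (2 / |b p - b q|) :=
          mul_le_mul (mul_le_mul (ha p hp) (ha q (mem_of_mem_erase hq)) (norm_nonneg _) hA)
            (norm_integral_exp_I_mul_le hd _ _) (norm_nonneg _) (mul_nonneg hA hA)
      _ ≤ A * A * (2 / (δ * |(p : ℝ) - q|)) := by gcongr
      _ = A ^ 2 * (2 / δ) * (1 / |(p : ℝ) - q|) := by field_simp
  have hdiag : ‖a p‖ * ‖a p‖ * ‖∫ α in s..s + 1, exp (I * ↑(b p - b p) * α)‖ ≤ A ^ 2 := by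
    simpa [sq] using mul_le_mul (ha p hp) (ha p hp) (norm_nonneg _) hA
  rw [← add_sum_erase T _ hp]
  calc _ ≤ A ^ 2 + ∑ q ∈ T.erase p, A ^ 2 * (2 / δ) * (1 / |(p : ℝ) - q|) :=
        add_le_add hdiag (sum_le_sum hoff)
    _ ≤ A ^ 2 + A ^ 2 * (2 / δ) * (2 * (1 + Real.log B)) := by
        rw [← mul_sum]
        gcongr
        exact sum_erase_one_div_abs_sub_le hT (hT p hp)
    _ = A ^ 2 * (1 + 4 * (1 + Real.log B) / δ) := by ring

lemma abs_sub_mul_log_le_abs_sub_mul_self_log {M x y : ℝ} (hM : 1 ≤ M) (hx : M ≤ x) (hy : M ≤ y) :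
    |x - y| * Real.log M ≤ |x * Real.log x - y * Real.log y| := by
  wlog hxy : x ≤ y generalizing x y
  · rw [abs_sub_comm, abs_sub_comm (x * _)]
    exact this hy hx (le_of_not_ge hxy)
  have hM0 : 0 < M := one_pos.trans_le hM
  have hlogM : 0 ≤ Real.log M := Real.log_nonneg hM
  have hlogx : Real.log M ≤ Real.log x := Real.log_le_log hM0 hx
  have hlogy : Real.log x ≤ Real.log y := Real.log_le_log (hM0.trans_le hx) hxy
  rw [abs_sub_comm, abs_of_nonneg (sub_nonneg.2 hxy), abs_sub_comm]
  refine le_trans ?_ (le_abs_self _)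
  nlinarith

open Real in
lemma Ssum_eq (X α : ℝ) : Ssum X α = ∑ p ∈ (Ioc ⌊X / 2⌋₊ ⌊X⌋₊).filter Nat.Prime,
    (Real.log p : ℂ) * exp (I * ↑(2 * π * (p * Real.log p)) * α) := by
  refine sum_congr rfl fun p _ => ?_
  push_cast
  ring_nf

lemma integral_norm_Ssum_sq_le {X : ℝ} (hX : 2 < X) (n : ℝ) :
    ∫ α in n..n + 1, ‖Ssum X α‖ ^ 2
      ≤ X * (Real.log X ^ 2 * (1 + 4 * (1 + Real.log X) / (2 * Real.pi * Real.log (X / 2)))) := by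
  set P := (Ioc ⌊X / 2⌋₊ ⌊X⌋₊).filter Nat.Prime
  have hX0 : 0 ≤ X := by linarith
  have hL : 0 < Real.log (X / 2) := Real.log_pos (by linarith)
  have hP : ∀ p ∈ P, X / 2 < p ∧ p ≤ X := fun p hp => by
    obtain ⟨hlo, hhi⟩ := mem_Ioc.1 (mem_filter.1 hp).1
    exact ⟨(Nat.floor_lt (by linarith)).1 hlo, (Nat.le_floor_iff hX0).1 hhi⟩
  have hcard : (#P : ℝ) ≤ X :=
    le_trans (by exact_mod_cast (card_filter_le _ _).trans (by simp)) (Nat.floor_le hX0)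
  have hlogB : Real.log ⌊X⌋₊ ≤ Real.log X :=
    Real.log_le_log (Nat.cast_pos.2 (Nat.floor_pos.2 (by linarith))) (Nat.floor_le hX0)
  simp_rw [Ssum_eq]
  calc _ ≤ #P * (Real.log X ^ 2 *
        (1 + 4 * (1 + Real.log ⌊X⌋₊) / (2 * Real.pi * Real.log (X / 2)))) := by
        refine integral_norm_sum_mul_exp_sq_le_of_separated
          (fun q hq => (Nat.le_floor_iff hX0).2 (hP q hq).2) (fun p hp => ?_) (by positivity)
          (fun p hp q hq => ?_) n
        · have hp1 : 1 ≤ (p : ℝ) := by linarith [(hP p hp).1]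
          rw [norm_real, Real.norm_eq_abs, abs_of_nonneg (Real.log_nonneg hp1)]
          exact Real.log_le_log (by linarith) (hP p hp).2
        · rw [← mul_sub, abs_mul, abs_of_pos Real.two_pi_pos, mul_assoc, mul_comm (Real.log _)]
          gcongr
          exact abs_sub_mul_log_le_abs_sub_mul_self_log (by linarith) (hP p hp).1.le
            (hP q hq).1.le
    _ ≤ _ := by gcongr

theorem stmt6 :
    ∃ C : ℝ, 0 < C ∧ ∃ X₀ : ℝ, ∀ X : ℝ, X ≥ X₀ → ∀ n : ℝ,
      ∫ α in n..(n + 1), ‖Ssum X α‖ ^ 2 ≤ C * X * Real.log X ^ 2 := by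
  refine ⟨3, by norm_num, 2 * Real.exp 2, fun X hX n => ?_⟩
  have hX6 : 6 ≤ X := by linarith [Real.add_one_le_exp 2]
  have hL : 2 ≤ Real.log (X / 2) := (Real.le_log_iff_exp_le (by positivity)).2 (by linarith)
  have hlogX : Real.log X = Real.log 2 + Real.log (X / 2) := by
    rw [← Real.log_mul two_ne_zero (by positivity), mul_div_cancel₀ _ two_ne_zero]
  calc _ ≤ X * (Real.log X ^ 2 *
        (1 + 4 * (1 + Real.log X) / (2 * Real.pi * Real.log (X / 2)))) :=
        integral_norm_Ssum_sq_le (by linarith) n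
    _ ≤ X * (Real.log X ^ 2 * 3) := by
        gcongr
        rw [add_comm, ← le_sub_iff_add_le, div_le_iff₀ (by positivity)]
        nlinarith [Real.pi_gt_three, Real.log_two_lt_d9]
    _ = 3 * X * Real.log X ^ 2 := by ring
end

section
/- Define S(α) = Σ_{X/2 < p ≤ X} (log p)·e(α·p·log p) and let τ = X^(−23/25). Then ∫_{−τ}^{τ} |S(α)|² dα ≪ X·(log X)² for X sufficiently large. -/
open Finset

/-!
Write `F(t) = t log t`. Expanding the square,
`∫_{-τ}^{τ} |S(α)|² dα = ∑_{p,q} log p log q ∫_{-τ}^{τ} e(α (F(p) - F(q))) dα`.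
A diagonal term is at most `2τ (log X)²`. Off the diagonal the integral is at most
`1 / (π |F(p) - F(q)|)`, and `|F(p) - F(q)| ≥ |p - q| log (X/2)` because `F' = 1 + log` exceeds
`log (X/2)` on `(X/2, X]`. Summing `1 / |p - q|` over `q` costs only a factor `2 (1 + log X)`,
which cancels against `log (X/2)`, so each prime contributes `≪ (log X)²` and there are at most
`X` primes.
-/

open Real

namespace PrimeExpSum

noncomputable def e (y : ℝ) : ℂ := Complex.exp (2 * π * Complex.I * y)

@[fun_prop]
lemma continuous_e : Continuous e := by
  unfold e; fun_prop

lemma e_add (x y : ℝ) : e (x + y) = e x * e y := by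
  simp only [e, ← Complex.exp_add]; push_cast; ring_nf

lemma conj_e (x : ℝ) : starRingEnd ℂ (e x) = e (-x) := by
  rw [e, e, ← Complex.exp_conj]; congr 1; simp [map_ofNat]

lemma norm_e (x : ℝ) : ‖e x‖ = 1 := by
  rw [e, Complex.norm_exp]; simp

lemma norm_integral_e_le (a b c : ℝ) : ‖∫ α in a..b, e (α * c)‖ ≤ |b - a| := by
  simpa using intervalIntegral.norm_integral_le_of_norm_le_const (C := 1)
    (fun α _ => (norm_e (α * c)).le)

lemma norm_integral_e_le_inv (a b : ℝ) {c : ℝ} (hc : c ≠ 0) :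
    ‖∫ α in a..b, e (α * c)‖ ≤ 1 / (π * |c|) := by
  set w : ℂ := 2 * π * Complex.I * c
  have hw : w ≠ 0 := by simp [w, pi_ne_zero, hc]
  have hew : ∀ α : ℝ, e (α * c) = Complex.exp (w * α) := fun α => by
    simp only [e, w]; push_cast; ring_nf
  simp_rw [hew]
  rw [integral_exp_mul_complex hw, norm_div]
  have hnum : ‖Complex.exp (w * b) - Complex.exp (w * a)‖ ≤ 2 := by
    calc _ ≤ ‖e (b * c)‖ + ‖e (a * c)‖ := by rw [hew, hew]; exact norm_sub_le _ _
      _ = 2 := by rw [norm_e, norm_e]; norm_num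
  have hden : ‖w‖ = 2 * π * |c| := by simp [w, abs_of_pos pi_pos]
  rw [hden, div_le_div_iff₀ (by positivity) (by positivity)]
  nlinarith [mul_le_mul_of_nonneg_right hnum (by positivity : 0 ≤ π * |c|)]

lemma integral_norm_sum_sq_le {ι : Type*} (s : Finset ι) (a : ι → ℂ) (θ : ι → ℝ) (u v : ℝ) :
    ∫ α in u..v, ‖∑ i ∈ s, a i * e (α * θ i)‖ ^ 2 ≤
      ∑ i ∈ s, ∑ j ∈ s, ‖a i‖ * ‖a j‖ * ‖∫ α in u..v, e (α * (θ i - θ j))‖ := by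
  have hexpand : ∀ α : ℝ, ((‖∑ i ∈ s, a i * e (α * θ i)‖ ^ 2 : ℝ) : ℂ) =
      ∑ i ∈ s, ∑ j ∈ s, a i * starRingEnd ℂ (a j) * e (α * (θ i - θ j)) := fun α => by
    rw [Complex.ofReal_pow, ← Complex.mul_conj', map_sum, sum_mul_sum]
    refine sum_congr rfl fun i _ => sum_congr rfl fun j _ => ?_
    rw [map_mul, conj_e, mul_sub, sub_eq_add_neg, e_add, ← neg_mul]
    ring
  have hcont : ∀ i j, Continuous fun α => a i * starRingEnd ℂ (a j) * e (α * (θ i - θ j)) :=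
    fun i j => by fun_prop
  calc ∫ α in u..v, ‖∑ i ∈ s, a i * e (α * θ i)‖ ^ 2
      ≤ ‖((∫ α in u..v, ‖∑ i ∈ s, a i * e (α * θ i)‖ ^ 2 : ℝ) : ℂ)‖ := by
        rw [Complex.norm_real]; exact le_abs_self _
    _ = ‖∑ i ∈ s, ∑ j ∈ s, a i * starRingEnd ℂ (a j) * ∫ α in u..v, e (α * (θ i - θ j))‖ := by
        rw [← intervalIntegral.integral_ofReal]
        simp_rw [hexpand]
        rw [intervalIntegral.integral_finsetSum fun i _ =>
          (continuous_finsetSum _ fun j _ => hcont i j).intervalIntegrable _ _]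
        refine congrArg _ (sum_congr rfl fun i _ => ?_)
        rw [intervalIntegral.integral_finsetSum fun j _ => (hcont i j).intervalIntegrable _ _]
        simp_rw [intervalIntegral.integral_const_mul]
    _ ≤ _ := by
        refine (norm_sum_le _ _).trans (sum_le_sum fun i _ => (norm_sum_le _ _).trans ?_)
        simp

lemma cast_harmonic_eq_sum_range (n : ℕ) : (harmonic n : ℝ) = ∑ k ∈ range n, ((k : ℝ) + 1)⁻¹ := by
  simp [harmonic]

lemma harmonic_le_one_add_log_of_le {n b : ℕ} (h : n ≤ b) : (harmonic n : ℝ) ≤ 1 + log b := by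
  have hlog : log n ≤ log b := by
    rcases n.eq_zero_or_pos with rfl | hn
    · simpa using log_natCast_nonneg b
    · exact log_le_log (by exact_mod_cast hn) (by exact_mod_cast h)
  linarith [harmonic_le_one_add_log n]

lemma sum_range_inv_abs_sub (p : ℕ) :
    ∑ q ∈ range p, |(p : ℝ) - q|⁻¹ = harmonic p := by
  rw [cast_harmonic_eq_sum_range, ← sum_range_reflect (fun k => ((k : ℝ) + 1)⁻¹)]
  refine sum_congr rfl fun q hq => ?_
  have hq := mem_range.1 hq
  rw [abs_of_pos (by rw [sub_pos]; exact_mod_cast hq)]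
  congr 1
  rw [Nat.cast_sub (by omega), Nat.cast_sub (by omega)]
  ring

lemma sum_Ioc_inv_abs_sub (p b : ℕ) :
    ∑ q ∈ Ioc p b, |(p : ℝ) - q|⁻¹ = harmonic (b - p) := by
  rw [cast_harmonic_eq_sum_range, ← Ico_add_one_add_one_eq_Ioc, sum_Ico_eq_sum_range,
    Nat.add_sub_add_right]
  refine sum_congr rfl fun k _ => ?_
  push_cast
  rw [abs_sub_comm, abs_of_pos (by linarith)]
  ring_nf

lemma sum_erase_inv_abs_sub_le {s : Finset ℕ} {p b : ℕ} (hs : ∀ q ∈ s, q ≤ b) (hp : p ≤ b) :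
    ∑ q ∈ s.erase p, |(p : ℝ) - q|⁻¹ ≤ 2 * (1 + log b) := by
  have hsub : s.erase p ⊆ range p ∪ Ioc p b := fun q hq => by
    have := hs q (mem_of_mem_erase hq)
    have := ne_of_mem_erase hq
    simp only [mem_union, mem_range, mem_Ioc]
    omega
  have hdisj : Disjoint (range p) (Ioc p b) :=
    disjoint_left.2 fun q h₁ h₂ => by simp only [mem_range, mem_Ioc] at h₁ h₂; omega
  calc ∑ q ∈ s.erase p, |(p : ℝ) - q|⁻¹ ≤ ∑ q ∈ range p ∪ Ioc p b, |(p : ℝ) - q|⁻¹ :=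
        sum_le_sum_of_subset_of_nonneg hsub fun _ _ _ => by positivity
    _ = harmonic p + harmonic (b - p) := by
        rw [sum_union hdisj, sum_range_inv_abs_sub, sum_Ioc_inv_abs_sub]
    _ ≤ 2 * (1 + log b) := by
        linarith [harmonic_le_one_add_log_of_le hp, harmonic_le_one_add_log_of_le (b.sub_le p)]

lemma log_mul_sub_le_sub_mul_log {c x y : ℝ} (hc : 0 < c) (hcy : c ≤ y) (hyx : y ≤ x) :
    log c * (x - y) ≤ x * log x - y * log y := by
  have hcx : log c ≤ log x := log_le_log hc (hcy.trans hyx)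
  have hyx' : log y ≤ log x := log_le_log (hc.trans_le hcy) hyx
  nlinarith [mul_le_mul_of_nonneg_right hcx (sub_nonneg.2 hyx),
    mul_le_mul_of_nonneg_left hyx' (hc.le.trans hcy)]

lemma log_mul_abs_sub_le_abs_sub_mul_log {c x y : ℝ} (hc : 0 < c) (hx : c ≤ x) (hy : c ≤ y) :
    log c * |x - y| ≤ |x * log x - y * log y| := by
  rcases le_total y x with h | h
  · rw [abs_of_nonneg (sub_nonneg.2 h)]
    exact (log_mul_sub_le_sub_mul_log hc hy h).trans (le_abs_self _)
  · rw [abs_sub_comm, abs_of_nonneg (sub_nonneg.2 h), abs_sub_comm]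
    exact (log_mul_sub_le_sub_mul_log hc hx h).trans (le_abs_self _)

theorem integral_norm_sum_sq_le_of_separated {s : Finset ℕ} {a : ℕ → ℂ} {θ : ℕ → ℝ}
    {A δ τ : ℝ} {b : ℕ} (hs : ∀ p ∈ s, p ≤ b) (ha : ∀ p ∈ s, ‖a p‖ ≤ A) (hδ : 0 < δ)
    (hθ : ∀ p ∈ s, ∀ q ∈ s, δ * |(p : ℝ) - q| ≤ |θ p - θ q|) (hτ : 0 ≤ τ) :
    ∫ α in -τ..τ, ‖∑ p ∈ s, a p * e (α * θ p)‖ ^ 2 ≤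
      #s * (A ^ 2 * (2 * τ + 2 * (1 + log b) / (π * δ))) := by
  refine (integral_norm_sum_sq_le s a θ _ _).trans ?_
  rw [← nsmul_eq_mul]
  refine sum_le_card_nsmul _ _ _ fun p hp => ?_
  have hA : 0 ≤ A := (norm_nonneg _).trans (ha p hp)
  have hdiag : ‖a p‖ * ‖a p‖ * ‖∫ α in -τ..τ, e (α * (θ p - θ p))‖ ≤ A * A * (2 * τ) := by
    have := norm_integral_e_le (-τ) τ (θ p - θ p)
    rw [sub_neg_eq_add, ← two_mul, abs_of_nonneg (by positivity)] at this
    gcongr <;> exact ha p hp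
  have hoff : ∀ q ∈ s.erase p, ‖a p‖ * ‖a q‖ * ‖∫ α in -τ..τ, e (α * (θ p - θ q))‖ ≤
      A ^ 2 / (π * δ) * |(p : ℝ) - q|⁻¹ := fun q hq => by
    have hq' := mem_of_mem_erase hq
    have hpq : 0 < |(p : ℝ) - q| := by
      rw [abs_pos, sub_ne_zero, Nat.cast_inj.ne]
      exact (ne_of_mem_erase hq).symm
    have hθpq : 0 < |θ p - θ q| := (mul_pos hδ hpq).trans_le (hθ p hp q hq')
    calc ‖a p‖ * ‖a q‖ * ‖∫ α in -τ..τ, e (α * (θ p - θ q))‖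
        ≤ A * A * (1 / (π * |θ p - θ q|)) := by
          gcongr
          · exact ha p hp
          · exact ha q hq'
          · exact norm_integral_e_le_inv _ _ (abs_pos.1 hθpq)
      _ ≤ A * A * (1 / (π * (δ * |(p : ℝ) - q|))) := by
          gcongr
          exact hθ p hp q hq'
      _ = A ^ 2 / (π * δ) * |(p : ℝ) - q|⁻¹ := by field_simp
  calc ∑ q ∈ s, ‖a p‖ * ‖a q‖ * ‖∫ α in -τ..τ, e (α * (θ p - θ q))‖
      ≤ A * A * (2 * τ) + ∑ q ∈ s.erase p, A ^ 2 / (π * δ) * |(p : ℝ) - q|⁻¹ := by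
        rw [← add_sum_erase _ _ hp]
        exact add_le_add hdiag (sum_le_sum hoff)
    _ ≤ A * A * (2 * τ) + A ^ 2 / (π * δ) * (2 * (1 + log b)) := by
        rw [← mul_sum]
        gcongr
        exact sum_erase_inv_abs_sub_le hs (hs p hp)
    _ = A ^ 2 * (2 * τ + 2 * (1 + log b) / (π * δ)) := by ring

end PrimeExpSum

open PrimeExpSum

lemma log_div_two_ge {X : ℝ} (hX : 4 ≤ X) : log X / 2 ≤ log (X / 2) := by
  have h : log X ≤ log ((X / 2) ^ 2) := log_le_log (by linarith) (by nlinarith)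
  rw [log_pow] at h
  linarith

lemma mem_Ioc_floor_half {X : ℝ} (hX : 0 ≤ X) {p : ℕ} (hp : p ∈ Ioc ⌊X / 2⌋₊ ⌊X⌋₊) :
    X / 2 < p ∧ (p : ℝ) ≤ X := by
  rw [mem_Ioc, Nat.floor_lt (by positivity), Nat.le_floor_iff hX] at hp
  exact hp

lemma natCast_card_Ioc_floor_le (a : ℕ) {X : ℝ} (hX : 0 ≤ X) : (#(Ioc a ⌊X⌋₊) : ℝ) ≤ X :=
  calc (#(Ioc a ⌊X⌋₊) : ℝ) ≤ ⌊X⌋₊ := by rw [Nat.card_Ioc]; exact_mod_cast Nat.sub_le _ _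
    _ ≤ X := Nat.floor_le hX

lemma two_mul_add_div_log_le_five {X τ : ℝ} (hX : 16 ≤ X) (hτ : τ ≤ 1) :
    2 * τ + 2 * (1 + log ⌊X⌋₊) / (π * log (X / 2)) ≤ 5 := by
  have hL : 1 ≤ log X := by
    rw [le_log_iff_exp_le (by linarith)]
    linarith [exp_one_lt_d9]
  have hδ := log_div_two_ge (X := X) (by linarith)
  have hb : log ⌊X⌋₊ ≤ log X :=
    log_le_log (by exact_mod_cast Nat.floor_pos.2 (by linarith)) (Nat.floor_le (by linarith))
  have : 2 * (1 + log ⌊X⌋₊) / (π * log (X / 2)) ≤ 3 := by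
    rw [div_le_iff₀ (by nlinarith [pi_gt_three])]
    nlinarith [pi_gt_three]
  linarith

lemma Ssum_eq_sum_e (X α : ℝ) :
    Ssum X α = ∑ p ∈ (Ioc ⌊X / 2⌋₊ ⌊X⌋₊).filter Nat.Prime,
      (log p : ℂ) * e (α * (p * log p)) := by
  refine sum_congr rfl fun p _ => ?_
  simp only [e]
  push_cast
  ring_nf

theorem stmt7 :
    ∃ C : ℝ, 0 < C ∧ ∃ X₀ : ℝ, ∀ X : ℝ, X ≥ X₀ →
      ∫ α in (-(X ^ (-(23 : ℝ) / 25)))..(X ^ (-(23 : ℝ) / 25)),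
          ‖Ssum X α‖ ^ 2
        ≤ C * X * Real.log X ^ 2 := by
  refine ⟨5, by norm_num, 16, fun X hX => ?_⟩
  set τ := X ^ (-(23 : ℝ) / 25)
  set T := (Ioc ⌊X / 2⌋₊ ⌊X⌋₊).filter Nat.Prime
  have hτ : 0 ≤ τ ∧ τ ≤ 1 :=
    ⟨by positivity, rpow_le_one_of_one_le_of_nonpos (by linarith) (by norm_num)⟩
  have hT : ∀ p ∈ T, X / 2 < p ∧ (p : ℝ) ≤ X := fun p hp =>
    mem_Ioc_floor_half (by linarith) (mem_filter.1 hp).1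
  have hweight : ∀ p ∈ T, ‖(log p : ℂ)‖ ≤ log X := fun p hp => by
    rw [Complex.norm_real, norm_of_nonneg (log_nonneg (by linarith [hT p hp]))]
    exact log_le_log (by linarith [hT p hp]) (hT p hp).2
  have hbound := integral_norm_sum_sq_le_of_separated (θ := fun p => p * log p)
    (b := ⌊X⌋₊) (fun p hp => Nat.le_floor (hT p hp).2) hweight (log_pos (by linarith))
    (fun p hp q hq => log_mul_abs_sub_le_abs_sub_mul_log (by linarith)
      (hT p hp).1.le (hT q hq).1.le) hτ.1
  simp_rw [Ssum_eq_sum_e]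
  calc _ ≤ _ := hbound
    _ ≤ #T * (log X ^ 2 * 5) := by gcongr; exact two_mul_add_div_log_le_five hX hτ.2
    _ ≤ X * (log X ^ 2 * 5) := by
        gcongr
        exact (Nat.cast_le.2 (card_filter_le _ _)).trans (natCast_card_Ioc_floor_le _ (by linarith))
    _ = 5 * X * log X ^ 2 := by ring
end

section
/- (First derivative test) Let F, G be real functions on [a,b] with G continuous, |G(x)| ≤ H on [a,b], F continuously differentiable, G/F' monotone, and F'(x) ≥ h > 0 for all x in [a,b] (or F'(x) ≤ −h < 0 for all x). Then |∫_a^b G(x)·e(F(x)) dx| ≪ H/h, with an absolute implied constant. -/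
/-!
Write `G e(F) = φ • ψ` with `φ = G / F'` and `ψ = F' e(F)`. Then `|φ| ≤ H / h`, and `ψ` is the
derivative of `e(F) / (2πi)`, so every integral `∫_c^b ψ` has norm at most `1 / π`. For monotone
`φ` the second mean value theorem bounds `∫_a^b φ ψ` by `(|φ a| + (φ b - φ a)) · sup_c |∫_c^b ψ|`;
its proof writes `φ - φ a` as a layer-cake integral `∫_0^{φ b - φ a} 1[t < φ - φ a] dt`, whose
superlevel sets are intervals ending at `b`. This gives `C = 3 / π`.
-/

open MeasureTheory Set Complex Real

section SecondMeanValue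

variable {E : Type*} [NormedAddCommGroup E] [NormedSpace ℝ E]

theorem exists_inter_Ioc_ae_eq_Ioc {U : Set ℝ} (hU : IsUpperSet U) {a b : ℝ} (hab : a ≤ b)
    (hb : b ∈ U) : ∃ c ∈ Icc a b, (U ∩ Ioc a b : Set ℝ) =ᵐ[volume] Ioc c b := by
  have hne : (U ∩ Icc a b).Nonempty := ⟨b, hb, right_mem_Icc.2 hab⟩
  have hbdd : BddBelow (U ∩ Icc a b) := ⟨a, fun x hx => hx.2.1⟩
  set c := sInf (U ∩ Icc a b)
  refine ⟨c, ⟨le_csInf hne fun x hx => hx.2.1, csInf_le hbdd ⟨hb, right_mem_Icc.2 hab⟩⟩, ?_⟩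
  have hsub : Ioc c b ⊆ U ∩ Ioc a b := fun x hx => by
    obtain ⟨u, hu, hux⟩ := exists_lt_of_csInf_lt hne hx.1
    exact ⟨hU hux.le hu.1, hu.2.1.trans_lt hux, hx.2⟩
  have hsup : U ∩ Ioc a b ⊆ Icc c b := fun x hx =>
    ⟨csInf_le hbdd ⟨hx.1, Ioc_subset_Icc_self hx.2⟩, hx.2.2⟩
  exact (hsup.eventuallyLE.trans Ioc_ae_eq_Icc.symm.le).antisymm hsub.eventuallyLE

theorem norm_setIntegral_inter_Ioc_le {U : Set ℝ} (hU : IsUpperSet U) {a b M : ℝ} (hab : a ≤ b)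
    (hb : b ∈ U) {ψ : ℝ → E} (hM : ∀ c ∈ Icc a b, ‖∫ x in c..b, ψ x‖ ≤ M) :
    ‖∫ x in U ∩ Ioc a b, ψ x‖ ≤ M := by
  obtain ⟨c, hc, hae⟩ := exists_inter_Ioc_ae_eq_Ioc hU hab hb
  rw [setIntegral_congr_set hae, ← intervalIntegral.integral_of_le hc.2]
  exact hM c hc

variable [CompleteSpace E]

theorem integral_smul_eq_integral_setIntegral_superlevel {α : Type*} [MeasurableSpace α]
    {μ : Measure α} [SFinite μ]
    {Φ : α → ℝ} {ψ : α → E} {T : ℝ} (hΦ : Measurable Φ) (hψ : Integrable ψ μ)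
    (hΦT : ∀ᵐ x ∂μ, Φ x ∈ Icc 0 T) :
    ∫ x, Φ x • ψ x ∂μ = ∫ t in Ioo 0 T, ∫ x in {x | t < Φ x}, ψ x ∂μ := by
  set f : α → ℝ → E := fun x t => (Iio (Φ x)).indicator (fun _ => ψ x) t
  have hf : Integrable (Function.uncurry f) (μ.prod (volume.restrict (Ioo 0 T))) := by
    have hmeas : MeasurableSet {p : α × ℝ | p.2 < Φ p.1} :=
      measurableSet_lt measurable_snd (hΦ.comp measurable_fst)
    refine (hψ.comp_fst _).mono (hψ.1.comp_fst.indicator hmeas) (.of_forall fun p => ?_)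
    exact norm_indicator_le_norm_self (fun _ => ψ p.1) p.2
  calc ∫ x, Φ x • ψ x ∂μ = ∫ x, (∫ t in Ioo 0 T, f x t) ∂μ := by
        refine integral_congr_ae (hΦT.mono fun x hx => ?_)
        simp only [f]
        rw [integral_indicator_const _ measurableSet_Iio,
          measureReal_restrict_apply measurableSet_Iio, Iio_inter_Ioo, min_eq_left hx.2,
          Real.volume_real_Ioo_of_le hx.1, sub_zero]
    _ = ∫ t in Ioo 0 T, ∫ x, f x t ∂μ := integral_integral_swap hf
    _ = ∫ t in Ioo 0 T, ∫ x in {x | t < Φ x}, ψ x ∂μ := by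
        congr 1 with t
        rw [← integral_indicator (measurableSet_lt measurable_const hΦ)]
        rfl

theorem norm_intervalIntegral_smul_le_of_monotone {φ : ℝ → ℝ} {ψ : ℝ → E} {a b M : ℝ}
    (hab : a ≤ b) (hφ : Monotone φ) (hψ : IntervalIntegrable ψ volume a b)
    (hM : ∀ c ∈ Icc a b, ‖∫ x in c..b, ψ x‖ ≤ M) :
    ‖∫ x in a..b, φ x • ψ x‖ ≤ (|φ a| + (φ b - φ a)) * M := by
  set Φ : ℝ → ℝ := fun x => φ x - φ a
  have hΦm : Measurable Φ := hφ.measurable.sub_const _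
  have hψ' : IntegrableOn ψ (Ioc a b) := (intervalIntegrable_iff_integrableOn_Ioc_of_le hab).1 hψ
  have hΦ : ∀ x ∈ Ioc a b, Φ x ∈ Icc 0 (φ b - φ a) := fun x hx =>
    ⟨sub_nonneg.2 (hφ hx.1.le), sub_le_sub_right (hφ hx.2) _⟩
  have hΦψ : IntegrableOn (fun x => Φ x • ψ x) (Ioc a b) :=
    hψ'.bdd_smul (φ b - φ a) hΦm.aestronglyMeasurable
      ((ae_restrict_iff' measurableSet_Ioc).2 (.of_forall fun x hx => by
        rw [Real.norm_of_nonneg (hΦ x hx).1]; exact (hΦ x hx).2))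
  have hlayer : ‖∫ x in Ioc a b, Φ x • ψ x‖ ≤ (φ b - φ a) * M := by
    rw [integral_smul_eq_integral_setIntegral_superlevel hΦm hψ'
      ((ae_restrict_iff' measurableSet_Ioc).2 (.of_forall hΦ))]
    refine (norm_setIntegral_le_of_norm_le_const (C := M) measure_Ioo_lt_top
      fun t ht => ?_).trans_eq ?_
    · rw [Measure.restrict_restrict (measurableSet_lt measurable_const hΦm)]
      exact norm_setIntegral_inter_Ioc_le
        (fun x y hxy hx => hx.trans_le (sub_le_sub_right (hφ hxy) _)) hab ht.2 hM
    · rw [Real.volume_real_Ioo_of_le (sub_nonneg.2 (hφ hab)), sub_zero, mul_comm]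
  have hsplit : ∫ x in a..b, φ x • ψ x = (φ a • ∫ x in a..b, ψ x) + ∫ x in Ioc a b, Φ x • ψ x := by
    have hψa : IntegrableOn (fun x => φ a • ψ x) (Ioc a b) := hψ'.smul (φ a)
    rw [intervalIntegral.integral_of_le hab, intervalIntegral.integral_of_le hab,
      ← integral_smul, ← integral_add hψa hΦψ]
    congr 1 with x
    rw [← add_smul, add_sub_cancel]
  calc ‖∫ x in a..b, φ x • ψ x‖
      ≤ |φ a| * M + (φ b - φ a) * M := by
        rw [hsplit]
        refine (norm_add_le _ _).trans (add_le_add ?_ hlayer)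
        rw [norm_smul, Real.norm_eq_abs]
        exact mul_le_mul_of_nonneg_left (hM a (left_mem_Icc.2 hab)) (abs_nonneg _)
    _ = (|φ a| + (φ b - φ a)) * M := by ring

theorem norm_intervalIntegral_smul_le_of_monotoneOn {φ : ℝ → ℝ} {ψ : ℝ → E} {a b M : ℝ}
    (hab : a ≤ b) (hφ : MonotoneOn φ (Icc a b)) (hψ : IntervalIntegrable ψ volume a b)
    (hM : ∀ c ∈ Icc a b, ‖∫ x in c..b, ψ x‖ ≤ M) :
    ‖∫ x in a..b, φ x • ψ x‖ ≤ (|φ a| + (φ b - φ a)) * M := by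
  set φ' := IccExtend hab fun x : Icc a b => φ x
  have hφ' : EqOn φ' φ (Icc a b) := fun x hx => IccExtend_of_mem hab _ hx
  have h := norm_intervalIntegral_smul_le_of_monotone (φ := φ') hab
    ((monotoneOn_iff_monotone.1 hφ).IccExtend hab) hψ hM
  rwa [hφ' (left_mem_Icc.2 hab), hφ' (right_mem_Icc.2 hab), intervalIntegral.integral_congr
    fun x hx => by rw [hφ' (uIcc_of_le hab ▸ hx)]] at h

theorem norm_intervalIntegral_smul_le_three_mul {φ : ℝ → ℝ} {ψ : ℝ → E} {a b K M : ℝ}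
    (hab : a ≤ b) (hφ : MonotoneOn φ (Icc a b) ∨ AntitoneOn φ (Icc a b))
    (hK : ∀ x ∈ Icc a b, |φ x| ≤ K) (hψ : IntervalIntegrable ψ volume a b)
    (hM : ∀ c ∈ Icc a b, ‖∫ x in c..b, ψ x‖ ≤ M) :
    ‖∫ x in a..b, φ x • ψ x‖ ≤ 3 * K * M := by
  have hM0 : 0 ≤ M := by simpa using hM b (right_mem_Icc.2 hab)
  have key : ∀ φ : ℝ → ℝ, MonotoneOn φ (Icc a b) → (∀ x ∈ Icc a b, |φ x| ≤ K) →
      ‖∫ x in a..b, φ x • ψ x‖ ≤ 3 * K * M := fun φ hφ hK => by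
    refine (norm_intervalIntegral_smul_le_of_monotoneOn hab hφ hψ hM).trans
      (mul_le_mul_of_nonneg_right ?_ hM0)
    have ha := hK a (left_mem_Icc.2 hab)
    have hb := hK b (right_mem_Icc.2 hab)
    linarith [abs_le.1 ha, abs_le.1 hb]
  rcases hφ with hφ | hφ
  · exact key φ hφ hK
  · simpa [neg_smul, intervalIntegral.integral_neg] using
      key (-φ) hφ.neg fun x hx => by simpa using hK x hx

end SecondMeanValue

theorem hasDerivAt_cexp_two_pi_I_mul_div {f : ℝ → ℝ} {f' x : ℝ} (hf : HasDerivAt f f' x) :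
    HasDerivAt (fun y => exp (2 * π * I * f y) / (2 * π * I))
      (f' * exp (2 * π * I * f x)) x := by
  refine (((hf.ofReal_comp.const_mul (2 * π * I)).cexp).div_const (2 * π * I)).congr_deriv ?_
  field_simp

theorem norm_cexp_two_pi_I_mul_div (t : ℝ) : ‖exp (2 * π * I * t) / (2 * π * I)‖ = (2 * π)⁻¹ := by
  rw [norm_div, show (2 * π * I * t : ℂ) = ↑(2 * π * t) * I by push_cast; ring,
    norm_exp_ofReal_mul_I]
  simp [abs_of_pos pi_pos]

theorem intervalIntegrable_deriv_mul_cexp {F F' : ℝ → ℝ} {u v : ℝ}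
    (hF : ∀ x ∈ uIcc u v, HasDerivAt F (F' x) x) (hF' : ContinuousOn F' (uIcc u v)) :
    IntervalIntegrable (fun x => (F' x : ℂ) * exp (2 * π * I * F x)) volume u v := by
  have hFc : ContinuousOn F (uIcc u v) := fun x hx => (hF x hx).continuousAt.continuousWithinAt
  exact ((continuous_ofReal.comp_continuousOn hF').mul
    (continuous_exp.comp_continuousOn
      (continuousOn_const.mul (continuous_ofReal.comp_continuousOn hFc)))).intervalIntegrable

theorem norm_intervalIntegral_deriv_mul_cexp_le {F F' : ℝ → ℝ} {u v : ℝ}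
    (hF : ∀ x ∈ uIcc u v, HasDerivAt F (F' x) x) (hF' : ContinuousOn F' (uIcc u v)) :
    ‖∫ x in u..v, (F' x : ℂ) * exp (2 * π * I * F x)‖ ≤ π⁻¹ := by
  rw [intervalIntegral.integral_eq_sub_of_hasDerivAt
    (fun x hx => hasDerivAt_cexp_two_pi_I_mul_div (hF x hx))
    (intervalIntegrable_deriv_mul_cexp hF hF')]
  calc _ ≤ (2 * π)⁻¹ + (2 * π)⁻¹ := by
        refine (norm_sub_le _ _).trans_eq ?_
        rw [norm_cexp_two_pi_I_mul_div, norm_cexp_two_pi_I_mul_div]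
    _ = π⁻¹ := by ring

theorem stmt10 :
    ∃ C : ℝ, 0 < C ∧ ∀ (a b H h : ℝ) (F F' G : ℝ → ℝ),
      a < b → 0 < H → 0 < h →
      ContinuousOn G (Set.Icc a b) →
      (∀ x ∈ Set.Icc a b, |G x| ≤ H) →
      (∀ x ∈ Set.Icc a b, HasDerivAt F (F' x) x) →
      ContinuousOn F' (Set.Icc a b) →
      (MonotoneOn (fun x => G x / F' x) (Set.Icc a b) ∨
        AntitoneOn (fun x => G x / F' x) (Set.Icc a b)) →
      ((∀ x ∈ Set.Icc a b, h ≤ F' x) ∨ (∀ x ∈ Set.Icc a b, F' x ≤ -h)) →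
      ‖∫ x in a..b, (G x : ℂ) *
          Complex.exp (2 * Real.pi * Complex.I * (F x))‖
        ≤ C * H / h := by
  refine ⟨3 / π, by positivity, fun a b H h F F' G hab hH hh _ hG hF hF' hmono hsign => ?_⟩
  have hF'h : ∀ x ∈ Icc a b, h ≤ |F' x| := by
    rcases hsign with hs | hs <;> intro x hx
    · exact (hs x hx).trans (le_abs_self _)
    · exact le_neg.1 (hs x hx) |>.trans (neg_le_abs _)
  have hφ : ∀ x ∈ Icc a b, |G x / F' x| ≤ H / h := fun x hx => by
    rw [abs_div]
    exact div_le_div₀ hH.le (hG x hx) hh (hF'h x hx)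
  have hab_uIcc : uIcc a b = Icc a b := uIcc_of_le hab.le
  have hsub : ∀ c ∈ Icc a b, uIcc c b ⊆ Icc a b := fun c hc =>
    uIcc_subset_Icc hc (right_mem_Icc.2 hab.le)
  have hM : ∀ c ∈ Icc a b,
      ‖∫ x in c..b, (F' x : ℂ) * exp (2 * π * I * F x)‖ ≤ π⁻¹ := fun c hc =>
    norm_intervalIntegral_deriv_mul_cexp_le (fun x hx => hF x (hsub c hc hx))
      (hF'.mono (hsub c hc))
  have hψ := intervalIntegrable_deriv_mul_cexp (fun x hx => hF x (hab_uIcc ▸ hx))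
    (hab_uIcc ▸ hF')
  have hfactor : ∫ x in a..b, (G x : ℂ) * exp (2 * π * I * F x)
      = ∫ x in a..b, (G x / F' x) • ((F' x : ℂ) * exp (2 * π * I * F x)) := by
    refine intervalIntegral.integral_congr fun x hx => ?_
    have hx' : (F' x : ℂ) ≠ 0 :=
      ofReal_ne_zero.2 (abs_pos.1 (hh.trans_le (hF'h x (hab_uIcc ▸ hx))))
    simp only [real_smul, ofReal_div]
    field_simp
  rw [hfactor]
  calc _ ≤ 3 * (H / h) * π⁻¹ := norm_intervalIntegral_smul_le_three_mul hab.le hmono hφ hψ hM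
    _ = 3 / π * H / h := by ring
end

section
/- (Weyl–van der Corput inequality) For any complex numbers a(n) defined for integers n in (a, b] and any positive integer Q, |Σ_{a<n≤b} a(n)|² ≤ (1 + (b−a)/Q) · Σ_{|q|≤Q} (1 − |q|/Q) · Σ_{a<n, n+q≤b} a(n+q)·conj(a(n)). -/
/-!
Extend `c` by zero outside `(a, b]` to `g` and average over `Q` shifts:
`Q • ∑ n, g n = ∑ m, ∑ r ∈ [1, Q], g (m + r)`, where only the `b - a + Q - 1` windows
`m ∈ [a + 1 - Q, b - 1]` meet the support. Cauchy–Schwarz over `m` bounds `Q² ‖∑ g‖²` by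
`(b - a + Q - 1) ∑_m ‖∑_r g (m + r)‖²`, and expanding the square, a pair `(r, s)` contributes the
autocorrelation at `q = r - s`, which occurs for exactly `Q - |q|` pairs.
-/

open Finset ComplexConjugate

theorem sum_sum_sub_eq_sum_card_nsmul {G M : Type*} [AddCommGroup G] [DecidableEq G]
    [AddCommMonoid M] (R S D : Finset G) (hD : ∀ r ∈ R, ∀ s ∈ S, r - s ∈ D) (h : G → M) :
    ∑ r ∈ R, ∑ s ∈ S, h (r - s) = ∑ q ∈ D, #{s ∈ S | s + q ∈ R} • h q := by
  have hfiber : ∀ s ∈ S, ∑ r ∈ R, h (r - s) = ∑ q ∈ D with s + q ∈ R, h q := fun s hs =>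
    sum_nbij' (· - s) (s + ·) (fun r hr => mem_filter.2 ⟨hD r hr s hs, by simpa⟩)
      (fun q hq => (mem_filter.1 hq).2) (fun r _ => by simp) (fun q _ => by simp)
      (fun r _ => rfl)
  simp only [← sum_const, sum_filter]
  rw [sum_comm, sum_congr rfl hfiber, sum_comm]
  simp only [sum_filter]

theorem card_filter_add_mem_Icc (Q q : ℤ) (hq : |q| ≤ Q) :
    (#{s ∈ Icc 1 Q | s + q ∈ Icc 1 Q} : ℤ) = Q - |q| := by
  have : {s ∈ Icc 1 Q | s + q ∈ Icc 1 Q} = Icc (max 1 (1 - q)) (min Q (Q - q)) := by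
    ext s; simp only [mem_filter, mem_Icc]; omega
  rw [this, Int.card_Icc]
  rcases abs_cases q with ⟨h, _⟩ | ⟨h, _⟩ <;> omega

theorem sum_Icc_add_eq_sum_of_support_subset {M : Type*} [AddCommMonoid M] {F : ℤ → M}
    {I : Finset ℤ} (hF : ∀ n ∉ I, F n = 0) {lo hi s : ℤ} (hI : I ⊆ Icc (lo + s) (hi + s)) :
    ∑ m ∈ Icc lo hi, F (m + s) = ∑ n ∈ I, F n := by
  rw [sum_subset hI fun n _ hn => hF n hn, ← map_add_right_Icc, sum_map]
  rfl

theorem norm_sum_sq_le_card_mul_sum_norm_sq {ι E : Type*} [SeminormedAddCommGroup E]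
    (s : Finset ι) (f : ι → E) : ‖∑ i ∈ s, f i‖ ^ 2 ≤ #s * ∑ i ∈ s, ‖f i‖ ^ 2 :=
  (pow_le_pow_left₀ (norm_nonneg _) (norm_sum_le s f) 2).trans sq_sum_le_card_mul_sum_sq

def autocorrelation (c : ℤ → ℂ) (I : Finset ℤ) (q : ℤ) : ℂ :=
  ∑ n ∈ I with n + q ∈ I, c (n + q) * conj (c n)

theorem autocorrelation_eq_sum_of_support {g : ℤ → ℂ} {I : Finset ℤ} (hg : ∀ n ∉ I, g n = 0)
    (q : ℤ) : autocorrelation g I q = ∑ n ∈ I, g (n + q) * conj (g n) := by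
  rw [autocorrelation, sum_filter]
  refine sum_congr rfl fun n _ => ?_
  split_ifs with h
  · rfl
  · rw [hg _ h, zero_mul]

theorem autocorrelation_indicator (c : ℤ → ℂ) (I : Finset ℤ) (q : ℤ) :
    autocorrelation ((I : Set ℤ).indicator c) I q = autocorrelation c I q :=
  sum_congr rfl fun n hn => by
    rw [mem_filter] at hn
    rw [Set.indicator_of_mem (mem_coe.2 hn.1), Set.indicator_of_mem (mem_coe.2 hn.2)]

section Window

variable {a b : ℤ} {Q : ℕ}

theorem sum_Icc_window_add {M : Type*} [AddCommMonoid M] {F : ℤ → M}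
    (hF : ∀ n ∉ Ioc a b, F n = 0) {r : ℤ} (hr : r ∈ Icc (1 : ℤ) Q) :
    ∑ m ∈ Icc (a + 1 - Q) (b - 1), F (m + r) = ∑ n ∈ Ioc a b, F n := by
  rw [mem_Icc] at hr
  refine sum_Icc_add_eq_sum_of_support_subset hF fun n hn => ?_
  rw [mem_Ioc] at hn
  rw [mem_Icc]
  omega

variable {g : ℤ → ℂ}

theorem sum_Icc_window_sum_eq_mul (hg : ∀ n ∉ Ioc a b, g n = 0) :
    ∑ m ∈ Icc (a + 1 - Q) (b - 1), ∑ r ∈ Icc (1 : ℤ) Q, g (m + r) =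
      Q * ∑ n ∈ Ioc a b, g n := by
  rw [sum_comm, sum_congr rfl fun r hr => sum_Icc_window_add hg hr, sum_const, Int.card_Icc,
    add_sub_cancel_right, Int.toNat_natCast, nsmul_eq_mul]

theorem sum_Icc_norm_window_sum_sq (hg : ∀ n ∉ Ioc a b, g n = 0) (hQ : 0 < Q) :
    ∑ m ∈ Icc (a + 1 - Q) (b - 1), ‖∑ r ∈ Icc (1 : ℤ) Q, g (m + r)‖ ^ 2 =
      Q * ∑ q ∈ Icc (-(Q : ℤ)) Q, (1 - |(q : ℝ)| / Q) * (autocorrelation g (Ioc a b) q).re := by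
  have hcorr : ∀ r ∈ Icc (1 : ℤ) Q, ∀ s ∈ Icc (1 : ℤ) Q,
      ∑ m ∈ Icc (a + 1 - Q) (b - 1), g (m + r) * conj (g (m + s)) =
        autocorrelation g (Ioc a b) (r - s) := by
    intro r _ s hs
    rw [autocorrelation_eq_sum_of_support hg, ← sum_Icc_window_add (by simp_all) hs]
    simp only [add_add_sub_cancel]
  have hdiff : ∀ r ∈ Icc (1 : ℤ) Q, ∀ s ∈ Icc (1 : ℤ) Q, r - s ∈ Icc (-(Q : ℤ)) Q := by
    simp only [mem_Icc]
    omega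
  calc ∑ m ∈ Icc (a + 1 - Q) (b - 1), ‖∑ r ∈ Icc (1 : ℤ) Q, g (m + r)‖ ^ 2
      = (∑ m ∈ Icc (a + 1 - Q) (b - 1),
          (∑ r ∈ Icc (1 : ℤ) Q, g (m + r)) * conj (∑ s ∈ Icc (1 : ℤ) Q, g (m + s))).re := by
        simp only [Complex.mul_conj', Complex.re_sum, ← Complex.ofReal_pow, Complex.ofReal_re]
    _ = (∑ r ∈ Icc (1 : ℤ) Q, ∑ s ∈ Icc (1 : ℤ) Q, autocorrelation g (Ioc a b) (r - s)).re := by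
        simp only [map_sum, sum_mul_sum]
        rw [sum_comm, sum_congr rfl fun r _ => sum_comm]
        simp only [← sum_congr rfl fun r hr => sum_congr rfl fun s hs => hcorr r hr s hs]
    _ = _ := by
        rw [sum_sum_sub_eq_sum_card_nsmul _ _ _ hdiff, Complex.re_sum, mul_sum]
        refine sum_congr rfl fun q hq => ?_
        have hcard : (#{s ∈ Icc 1 (Q : ℤ) | s + q ∈ Icc 1 (Q : ℤ)} : ℝ) = Q - |(q : ℝ)| := by
          exact_mod_cast card_filter_add_mem_Icc Q q (abs_le.2 (mem_Icc.1 hq))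
        rw [Complex.re_nsmul, nsmul_eq_mul, hcard]
        field_simp

theorem sum_weighted_autocorrelation_nonneg (hg : ∀ n ∉ Ioc a b, g n = 0) (hQ : 0 < Q) :
    0 ≤ ∑ q ∈ Icc (-(Q : ℤ)) Q, (1 - |(q : ℝ)| / Q) * (autocorrelation g (Ioc a b) q).re :=
  nonneg_of_mul_nonneg_right (sum_Icc_norm_window_sum_sq hg hQ ▸ by positivity)
    (Nat.cast_pos.2 hQ)

theorem norm_sum_Ioc_sq_le (hg : ∀ n ∉ Ioc a b, g n = 0) (hQ : 0 < Q) (hab : a < b) :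
    ‖∑ n ∈ Ioc a b, g n‖ ^ 2 ≤
      (1 + (b - a - 1) / Q) *
        ∑ q ∈ Icc (-(Q : ℤ)) Q, (1 - |(q : ℝ)| / Q) * (autocorrelation g (Ioc a b) q).re := by
  set W := ∑ q ∈ Icc (-(Q : ℤ)) Q, (1 - |(q : ℝ)| / Q) * (autocorrelation g (Ioc a b) q).re
  have hcard : (#(Icc (a + 1 - Q) (b - 1)) : ℝ) = b - a + Q - 1 := by
    rw [Int.card_Icc, ← Int.cast_natCast, Int.toNat_of_nonneg (by omega)]
    push_cast
    ring
  have key : (Q : ℝ) ^ 2 * ‖∑ n ∈ Ioc a b, g n‖ ^ 2 ≤ (b - a + Q - 1) * (Q * W) :=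
    calc (Q : ℝ) ^ 2 * ‖∑ n ∈ Ioc a b, g n‖ ^ 2
        = ‖∑ m ∈ Icc (a + 1 - Q) (b - 1), ∑ r ∈ Icc (1 : ℤ) Q, g (m + r)‖ ^ 2 := by
          rw [sum_Icc_window_sum_eq_mul hg, norm_mul, Complex.norm_natCast, mul_pow]
      _ ≤ _ := norm_sum_sq_le_card_mul_sum_norm_sq _ _
      _ = (b - a + Q - 1) * (Q * W) := by rw [hcard, sum_Icc_norm_window_sum_sq hg hQ]
  have hW : (1 + (b - a - 1) / Q) * W = (b - a + Q - 1) * (Q * W) / Q ^ 2 := by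
    field_simp
    ring
  rw [hW, le_div_iff₀ (by positivity)]
  linarith

end Window

theorem stmt12 (A B : ℝ) (c : ℤ → ℂ) (Q : ℕ) (hQ : 0 < Q) :
    ‖∑ n ∈ Finset.Ioc ⌊A⌋ ⌊B⌋, c n‖ ^ 2 ≤
      (1 + (B - A) / Q) *
        ∑ q ∈ Finset.Icc (-(Q : ℤ)) (Q : ℤ), (1 - |(q : ℝ)| / Q) *
          (∑ n ∈ (Finset.Ioc ⌊A⌋ ⌊B⌋).filter
              (fun n => n + q ∈ Finset.Ioc ⌊A⌋ ⌊B⌋),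
            c (n + q) * (starRingEnd ℂ) (c n)).re := by
  change _ ≤ _ * ∑ q ∈ _, _ * (autocorrelation c (Ioc ⌊A⌋ ⌊B⌋) q).re
  rcases le_or_gt ⌊B⌋ ⌊A⌋ with hempty | hab
  · simp [autocorrelation, Ioc_eq_empty_of_le hempty]
  set g := (Ioc ⌊A⌋ ⌊B⌋ : Set ℤ).indicator c
  have hg : ∀ n ∉ Ioc ⌊A⌋ ⌊B⌋, g n = 0 := fun n hn => Set.indicator_of_notMem hn c
  have hsum : ∑ n ∈ Ioc ⌊A⌋ ⌊B⌋, c n = ∑ n ∈ Ioc ⌊A⌋ ⌊B⌋, g n :=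
    sum_congr rfl fun n hn => (Set.indicator_of_mem (mem_coe.2 hn) c).symm
  have hlength : (⌊B⌋ - ⌊A⌋ - 1 : ℝ) ≤ B - A := by
    linarith [Int.floor_le B, Int.lt_floor_add_one A]
  simp only [hsum, ← autocorrelation_indicator c]
  calc ‖∑ n ∈ Ioc ⌊A⌋ ⌊B⌋, g n‖ ^ 2
      ≤ (1 + (⌊B⌋ - ⌊A⌋ - 1) / Q) *
          ∑ q ∈ Icc (-(Q : ℤ)) Q, (1 - |(q : ℝ)| / Q) * (autocorrelation g (Ioc ⌊A⌋ ⌊B⌋) q).re :=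
        norm_sum_Ioc_sq_le hg hQ hab
    _ ≤ _ := by
        gcongr
        exact sum_weighted_autocorrelation_nonneg hg hQ
end
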